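/- arXiv:2506.09687 — 4 statements merged into one kernel-verified Lean document; each statement's English description precedes it below -/
import Mathlib

section
/- Consider the space 𝔽^{n×n} (𝔽 = ℝ or ℂ) with the spectral norm. A linear functional f on 𝔽^{n×n} of dual norm 1 is extremal if and only if its standard matrix representation F ∈ 𝔽^{n×n} is of the form F = uvᴴ for vectors u, v ∈ 𝔽^n with ‖u‖₂ = ‖v‖₂ = 1. -/
open Matrix

variable {𝕜 : Type*} [RCLike 𝕜]

/-- The spectral norm (matrix 2-norm): the supremum of `‖A v‖₂` over unit Euclidean
norm vectors `v`. -/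
noncomputable def specNorm {m : Type*} [Fintype m] [DecidableEq m]
    (A : Matrix m m 𝕜) : ℝ :=
  sSup {r : ℝ | ∃ v : EuclideanSpace 𝕜 m, ‖v‖ = 1 ∧ r = ‖Matrix.toEuclideanLin A v‖}

/-- `Xs` is a spectral (best) approximation of `Y` from the subspace `𝒳`. -/
def IsSpectralApprox {m : Type*} [Fintype m] [DecidableEq m]
    (𝒳 : Submodule 𝕜 (Matrix m m 𝕜)) (Y Xs : Matrix m m 𝕜) : Prop :=
  Xs ∈ 𝒳 ∧ ∀ X ∈ 𝒳, specNorm (Y - Xs) ≤ specNorm (Y - X)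

/-- The span of the maximal right singular vectors of `M`. -/
noncomputable def maxRSV {m : Type*} [Fintype m] [DecidableEq m]
    (M : Matrix m m 𝕜) : Submodule 𝕜 (EuclideanSpace 𝕜 m) :=
  Submodule.span 𝕜 {v : EuclideanSpace 𝕜 m | ‖v‖ = 1 ∧ ‖Matrix.toEuclideanLin M v‖ = specNorm M}

/-- The `k`-dimensional field of the `k` matrices `A 0, …, A (k-1)` restricted to
the subspace `S`. -/
def kField {m : Type*} [Fintype m] [DecidableEq m] {k : ℕ}
    (A : Fin k → Matrix m m 𝕜) (S : Submodule 𝕜 (EuclideanSpace 𝕜 m)) : Set (Fin k → 𝕜) :=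
  {w | ∃ v : EuclideanSpace 𝕜 m, v ∈ S ∧ ‖v‖ = 1 ∧
     w = fun i => (inner 𝕜 v (Matrix.toEuclideanLin (A i) v) : 𝕜)}

/-- min-max value -/
noncomputable def minMaxVal {m : Type*} [Fintype m] [DecidableEq m]
    (𝒳 : Submodule 𝕜 (Matrix m m 𝕜)) (Y : Matrix m m 𝕜) : ℝ :=
  sInf {r : ℝ | ∃ X ∈ 𝒳, r = specNorm (Y - X)}

/-- max-min value -/
noncomputable def maxMinVal {m : Type*} [Fintype m] [DecidableEq m]
    (𝒳 : Submodule 𝕜 (Matrix m m 𝕜)) (Y : Matrix m m 𝕜) : ℝ :=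
  sSup {r : ℝ | ∃ v : EuclideanSpace 𝕜 m, ‖v‖ = 1 ∧
    r = sInf {s : ℝ | ∃ X ∈ 𝒳, s = ‖Matrix.toEuclideanLin (Y - X) v‖}}

/-- dual norm of a linear functional w.r.t. the spectral norm -/
noncomputable def dualNorm {m : Type*} [Fintype m] [DecidableEq m]
    (f : Matrix m m 𝕜 →ₗ[𝕜] 𝕜) : ℝ :=
  sSup {r : ℝ | ∃ A : Matrix m m 𝕜, specNorm A = 1 ∧ r = ‖f A‖}

/-- the rank one matrix `u vᴴ` -/
def outer {m : Type*} (u v : EuclideanSpace 𝕜 m) : Matrix m m 𝕜 :=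
  Matrix.of fun i j => u i * star (v j)

/-- nuclear (Schatten 1) norm: the sum of the singular values -/
noncomputable def nuclearNorm {m : Type*} [Fintype m] [DecidableEq m]
    (F : Matrix m m 𝕜) : ℝ :=
  ∑ i, Real.sqrt ((Matrix.isHermitian_conjTranspose_mul_self F).eigenvalues i)

/-!
Both norms are identified with operator norms: `specNorm` with the L2 operator norm on matrices
and `dualNorm` with the norm of the functional as a continuous linear map.

If `F = ∑ σᵢ uᵢ vᵢᴴ` is a singular value decomposition, the dual norm of `A ↦ tr (Fᴴ A)` is
`∑ σᵢ`, attained at the unitary sending `vᵢ` to `uᵢ`. Keeping the singular vectors fixed and moving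
the weights `σ` inside the standard simplex therefore stays on the dual unit sphere, so an extremal
functional has weights at a vertex of the simplex, i.e. `F = u vᴴ`.

Conversely, let `g = tr (Gᴴ ·)` have dual norm at most `1` and satisfy `g (u vᴴ) = 1`. Then
`‖G‖_F² = g G ≤ ‖G‖ ≤ ‖G‖_F`, so `‖G‖_F ≤ 1 = ‖u vᴴ‖_F`, and `⟨G, u vᴴ⟩_F = 1` is the equality
case of Cauchy–Schwarz: `G = u vᴴ`. If `tr ((u vᴴ)ᴴ ·)` is the midpoint of `f₁` and `f₂` on the dual
unit sphere, both take the value `1` at `u vᴴ` and hence coincide with it.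
-/

open scoped Matrix.Norms.L2Operator InnerProductSpace

theorem exists_eq_single_of_forall_perturbation {ι : Type*} [Fintype ι] [DecidableEq ι]
    {σ : ι → ℝ} (hσ : 0 ≤ σ) (hsum : ∑ i, σ i = 1)
    (h : ∀ τ : ι → ℝ, 0 ≤ σ + τ → 0 ≤ σ - τ → ∑ i, τ i = 0 → τ = 0) :
    ∃ a, σ = Pi.single a 1 := by
  obtain ⟨a, ha⟩ : ∃ a, σ a ≠ 0 := by
    by_contra! h0
    simp [h0] at hsum
  have hσ' : ∀ i, 0 ≤ σ i := hσ
  have hzero : ∀ b, b ≠ a → σ b = 0 := by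
    intro b hb
    set t := min (σ a) (σ b)
    have hta : t ≤ σ a := min_le_left _ _
    have htb : t ≤ σ b := min_le_right _ _
    have ht0 : 0 ≤ t := le_min (hσ' a) (hσ' b)
    have hτ := h (Pi.single a t - Pi.single b t)
      (fun i => by
        simp only [Pi.add_apply, Pi.sub_apply, Pi.single_apply, Pi.zero_apply]
        split_ifs <;> subst_vars <;>
          first | exact absurd rfl hb | linarith [hσ' i])
      (fun i => by
        simp only [Pi.sub_apply, Pi.single_apply, Pi.zero_apply]
        split_ifs <;> subst_vars <;>
          first | exact absurd rfl hb | linarith [hσ' i])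
      (by simp)
    have ht : t = 0 := by simpa [hb.symm] using congrFun hτ a
    rcases min_eq_iff.mp ht with ⟨hσa, -⟩ | ⟨hσb, -⟩
    exacts [absurd hσa ha, hσb]
  have hσa : σ a = 1 := by
    rwa [Finset.sum_eq_single a (fun b _ hb => hzero b hb) (by simp)] at hsum
  refine ⟨a, funext fun i => ?_⟩
  rcases eq_or_ne i a with rfl | hi
  · simp [hσa]
  · simp [hzero i hi, hi]

theorem RCLike.eq_one_of_norm_le_one_of_add_eq_two {a b : 𝕜} (ha : ‖a‖ ≤ 1) (hb : ‖b‖ ≤ 1)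
    (h : a + b = 2) : a = 1 := by
  have hre : RCLike.re a + RCLike.re b = 2 := by simpa using congrArg RCLike.re h
  have hre_a : RCLike.re a = 1 := by
    linarith [RCLike.re_le_norm a, RCLike.re_le_norm b]
  rw [← RCLike.re_eq_self_of_le (ha.trans hre_a.ge), hre_a, RCLike.ofReal_one]

section Rectangular
variable {m n : Type*} [Fintype m] [Fintype n] [DecidableEq n]

theorem norm_toEuclideanLin_le (A : Matrix m n 𝕜) (x : EuclideanSpace 𝕜 n) :
    ‖Matrix.toEuclideanLin A x‖ ≤ ‖A‖ * ‖x‖ :=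
  A.l2_opNorm_mulVec x

theorem l2_opNorm_le_of_forall {A : Matrix m n 𝕜} {c : ℝ} (hc : 0 ≤ c)
    (h : ∀ x, ‖Matrix.toEuclideanLin A x‖ ≤ c * ‖x‖) : ‖A‖ ≤ c :=
  ((Matrix.toEuclideanLin.trans LinearMap.toContinuousLinearMap) A).opNorm_le_bound hc h

omit [DecidableEq n] in
theorem trace_conjTranspose_mul_self_eq (M : Matrix m n 𝕜) :
    trace (Mᴴ * M) = ((∑ i, ∑ j, ‖M i j‖ ^ 2 : ℝ) : 𝕜) := by
  rw [Finset.sum_comm]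
  push_cast
  refine Finset.sum_congr rfl fun j _ => Finset.sum_congr rfl fun i _ => ?_
  simp only [Matrix.conjTranspose_apply, RCLike.star_def, RCLike.conj_mul]

theorem norm_toEuclideanLin_sq_le (M : Matrix m n 𝕜) (x : EuclideanSpace 𝕜 n) :
    ‖Matrix.toEuclideanLin M x‖ ^ 2 ≤ (∑ i, ∑ j, ‖M i j‖ ^ 2) * ‖x‖ ^ 2 := by
  rw [EuclideanSpace.norm_sq_eq, EuclideanSpace.norm_sq_eq, Finset.sum_mul]
  refine Finset.sum_le_sum fun i _ => ?_
  calc ‖(Matrix.toEuclideanLin M x) i‖ ^ 2 ≤ (∑ j, ‖M i j‖ * ‖x j‖) ^ 2 := by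
        gcongr
        rw [Matrix.ofLp_toLpLin]
        exact (norm_sum_le _ _).trans_eq (by simp [norm_mul])
    _ ≤ (∑ j, ‖M i j‖ ^ 2) * ∑ j, ‖x j‖ ^ 2 := Finset.sum_mul_sq_le_sq_mul_sq _ _ _

theorem l2_opNorm_sq_le (M : Matrix m n 𝕜) : ‖M‖ ^ 2 ≤ ∑ i, ∑ j, ‖M i j‖ ^ 2 := by
  have hS : 0 ≤ ∑ i, ∑ j, ‖M i j‖ ^ 2 := by positivity
  have : ‖M‖ ≤ √(∑ i, ∑ j, ‖M i j‖ ^ 2) := by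
    refine l2_opNorm_le_of_forall (Real.sqrt_nonneg _) fun x => ?_
    rw [← Real.sqrt_sq (norm_nonneg (Matrix.toEuclideanLin M x)), ← Real.sqrt_sq (norm_nonneg x),
      ← Real.sqrt_mul hS]
    exact Real.sqrt_le_sqrt (norm_toEuclideanLin_sq_le M x)
  calc ‖M‖ ^ 2 ≤ √(∑ i, ∑ j, ‖M i j‖ ^ 2) ^ 2 := by gcongr
    _ = _ := Real.sq_sqrt hS

end Rectangular

section Square
variable {m : Type*} [Fintype m] [DecidableEq m]

theorem specNorm_eq_l2_opNorm (A : Matrix m m 𝕜) : specNorm A = ‖A‖ := by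
  rw [← Matrix.l2_opNorm_toEuclideanCLM, ← ContinuousLinearMap.sSup_sphere_eq_norm, specNorm]
  congr 1
  ext r
  simp only [Set.mem_ofPred_eq, Set.mem_image, mem_sphere_iff_norm, sub_zero, eq_comm]
  rfl

theorem dualNorm_eq_opNorm (f : Matrix m m 𝕜 →ₗ[𝕜] 𝕜) :
    dualNorm f = ‖LinearMap.toContinuousLinearMap f‖ := by
  rw [← ContinuousLinearMap.sSup_sphere_eq_norm, dualNorm]
  congr 1
  ext r
  simp [eq_comm, specNorm_eq_l2_opNorm]

theorem dualNorm_nonneg (f : Matrix m m 𝕜 →ₗ[𝕜] 𝕜) : 0 ≤ dualNorm f := by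
  rw [dualNorm_eq_opNorm]
  exact norm_nonneg _

theorem norm_apply_le_dualNorm_mul (f : Matrix m m 𝕜 →ₗ[𝕜] 𝕜) (A : Matrix m m 𝕜) :
    ‖f A‖ ≤ dualNorm f * ‖A‖ := by
  rw [dualNorm_eq_opNorm]
  exact (LinearMap.toContinuousLinearMap f).le_opNorm A

def traceForm (F : Matrix m m 𝕜) : Matrix m m 𝕜 →ₗ[𝕜] 𝕜 :=
  Matrix.traceLinearMap m 𝕜 𝕜 ∘ₗ LinearMap.mulLeft 𝕜 Fᴴ

theorem traceForm_apply (F A : Matrix m m 𝕜) : traceForm F A = trace (Fᴴ * A) := rfl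

theorem traceForm_single (F : Matrix m m 𝕜) (i j : m) :
    traceForm F (Matrix.single i j 1) = star (F i j) := by
  simp [traceForm_apply, Matrix.trace_mul_single]

theorem eq_traceForm (g : Matrix m m 𝕜 →ₗ[𝕜] 𝕜) :
    g = traceForm (Matrix.of fun i j => star (g (Matrix.single i j 1))) := by
  refine Matrix.ext_linearMap 𝕜 fun i j => LinearMap.ext_ring ?_
  simp only [LinearMap.coe_comp, Function.comp_apply, Matrix.singleLinearMap_apply,
    traceForm_single, Matrix.of_apply, star_star]

theorem toEuclideanLin_outer (a b x : EuclideanSpace 𝕜 m) :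
    Matrix.toEuclideanLin (outer a b) x = ⟪b, x⟫_𝕜 • a := by
  ext i
  simp [Matrix.ofLp_toLpLin, Matrix.mulVec, dotProduct, outer, PiLp.inner_apply,
    Finset.mul_sum, mul_comm, mul_left_comm]

theorem traceForm_outer (u v : EuclideanSpace 𝕜 m) (A : Matrix m m 𝕜) :
    traceForm (outer u v) A = ⟪u, Matrix.toEuclideanLin A v⟫_𝕜 := by
  simp only [outer, RCLike.star_def, traceForm_apply, trace, diag_apply, Matrix.mul_apply,
    conjTranspose_apply, of_apply, star_mul', RingHomCompTriple.comp_apply, RingHom.id_apply,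
    PiLp.inner_apply, ofLp_toLpLin, toLin'_apply, mulVec, dotProduct, RCLike.inner_apply]
  rw [Finset.sum_comm]
  refine Finset.sum_congr rfl fun _ _ => ?_
  rw [Finset.sum_mul]
  exact Finset.sum_congr rfl fun _ _ => by ring

theorem l2_opNorm_outer_le (a b : EuclideanSpace 𝕜 m) : ‖outer a b‖ ≤ ‖a‖ * ‖b‖ := by
  refine l2_opNorm_le_of_forall (by positivity) fun x => ?_
  rw [toEuclideanLin_outer, norm_smul]
  calc ‖⟪b, x⟫_𝕜‖ * ‖a‖ ≤ ‖b‖ * ‖x‖ * ‖a‖ := by gcongr; exact norm_inner_le_norm b x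
    _ = ‖a‖ * ‖b‖ * ‖x‖ := by ring

theorem traceForm_outer_self {u v : EuclideanSpace 𝕜 m} (hu : ‖u‖ = 1) (hv : ‖v‖ = 1) :
    traceForm (outer u v) (outer u v) = 1 := by
  rw [traceForm_outer, toEuclideanLin_outer, inner_smul_right, inner_self_eq_norm_sq_to_K,
    inner_self_eq_norm_sq_to_K, hu, hv]
  simp

theorem sum_norm_sq_le_dualNorm_traceForm_sq (G : Matrix m m 𝕜) :
    ∑ i, ∑ j, ‖G i j‖ ^ 2 ≤ dualNorm (traceForm G) ^ 2 := by
  set S := ∑ i, ∑ j, ‖G i j‖ ^ 2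
  set d := dualNorm (traceForm G)
  have hS : 0 ≤ S := by positivity
  have hd : 0 ≤ d := dualNorm_nonneg _
  have hSG : S ≤ d * ‖G‖ :=
    calc S = ‖traceForm G G‖ := by
          rw [traceForm_apply, trace_conjTranspose_mul_self_eq, RCLike.norm_ofReal,
            abs_of_nonneg hS]
      _ ≤ d * ‖G‖ := norm_apply_le_dualNorm_mul _ _
  nlinarith [mul_le_mul hSG hSG hS (by positivity),
    mul_le_mul_of_nonneg_left (l2_opNorm_sq_le G) (sq_nonneg d)]

open ComplexOrder in
theorem eq_traceForm_outer_of_apply_outer_eq_one {g : Matrix m m 𝕜 →ₗ[𝕜] 𝕜}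
    (hg : dualNorm g ≤ 1) {u v : EuclideanSpace 𝕜 m} (hu : ‖u‖ = 1) (hv : ‖v‖ = 1)
    (h : g (outer u v) = 1) : g = traceForm (outer u v) := by
  set X := outer u v
  set G : Matrix m m 𝕜 := Matrix.of fun i j => star (g (Matrix.single i j 1))
  have hgG : g = traceForm G := eq_traceForm g
  rw [hgG] at h hg ⊢
  set S := ∑ i, ∑ j, ‖G i j‖ ^ 2
  have hGG : trace (Gᴴ * G) = (S : 𝕜) := trace_conjTranspose_mul_self_eq G
  have hS : S ≤ 1 := (sum_norm_sq_le_dualNorm_traceForm_sq G).trans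
    (pow_le_one₀ (dualNorm_nonneg _) hg)
  have hXX : trace (Xᴴ * X) = 1 := traceForm_outer_self hu hv
  have hXG : trace (Xᴴ * G) = 1 := by
    rw [← Matrix.conjTranspose_conjTranspose G, ← Matrix.conjTranspose_mul,
      Matrix.trace_conjTranspose, ← traceForm_apply, h, star_one]
  have hdiff : trace ((G - X)ᴴ * (G - X)) = ((S - 1 : ℝ) : 𝕜) := by
    rw [Matrix.conjTranspose_sub, Matrix.sub_mul, Matrix.mul_sub, Matrix.mul_sub,
      Matrix.trace_sub, Matrix.trace_sub, Matrix.trace_sub, hGG, hXX, hXG, ← traceForm_apply, h]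
    push_cast
    ring
  have hnonneg : (0 : ℝ) ≤ S - 1 := by
    have := trace_conjTranspose_mul_self_eq (G - X)
    rw [hdiff, RCLike.ofReal_inj] at this
    rw [this]
    positivity
  suffices G - X = 0 by rw [sub_eq_zero.mp this]
  rw [← Matrix.trace_conjTranspose_mul_self_eq_zero_iff, hdiff,
    show S - 1 = 0 by linarith, RCLike.ofReal_zero]

theorem toEuclideanLin_sum_smul_outer_apply (c : m → 𝕜) (u : m → EuclideanSpace 𝕜 m)
    (v : OrthonormalBasis m 𝕜 (EuclideanSpace 𝕜 m)) (j : m) :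
    Matrix.toEuclideanLin (∑ i, c i • outer (u i) (v i)) (v j) = c j • u j := by
  simp [toEuclideanLin_outer, orthonormal_iff_ite.mp v.orthonormal]

theorem traceForm_sum_smul_outer (σ : m → ℝ) (u v : m → EuclideanSpace 𝕜 m) (A : Matrix m m 𝕜) :
    traceForm (∑ i, (σ i : 𝕜) • outer (u i) (v i)) A
      = ∑ i, (σ i : 𝕜) * ⟪u i, Matrix.toEuclideanLin A (v i)⟫_𝕜 := by
  rw [traceForm_apply, Matrix.conjTranspose_sum, Finset.sum_mul, Matrix.trace_sum]
  refine Finset.sum_congr rfl fun i _ => ?_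
  rw [Matrix.conjTranspose_smul, Matrix.smul_mul, Matrix.trace_smul, ← traceForm_apply,
    traceForm_outer, RCLike.star_def, RCLike.conj_ofReal, smul_eq_mul]

theorem traceForm_sum_smul_outer_outer (σ : m → ℝ) (u v : OrthonormalBasis m 𝕜 (EuclideanSpace 𝕜 m))
    (j : m) : traceForm (∑ i, (σ i : 𝕜) • outer (u i) (v i)) (outer (u j) (v j)) = σ j := by
  rw [traceForm_sum_smul_outer]
  simp [toEuclideanLin_outer, orthonormal_iff_ite.mp v.orthonormal, apply_ite,
    inner_self_eq_norm_sq_to_K]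

theorem dualNorm_traceForm_sum_smul_outer {σ : m → ℝ} (hσ : 0 ≤ σ)
    (u v : OrthonormalBasis m 𝕜 (EuclideanSpace 𝕜 m)) :
    dualNorm (traceForm (∑ i, (σ i : 𝕜) • outer (u i) (v i))) = ∑ i, σ i := by
  set f := traceForm (∑ i, (σ i : 𝕜) • outer (u i) (v i))
  refine le_antisymm ?_ ?_
  · rw [dualNorm_eq_opNorm]
    refine ContinuousLinearMap.opNorm_le_bound _ (Finset.sum_nonneg fun i _ => hσ i) fun A => ?_
    rw [LinearMap.coe_toContinuousLinearMap', traceForm_sum_smul_outer, Finset.sum_mul]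
    refine (norm_sum_le _ _).trans (Finset.sum_le_sum fun i _ => ?_)
    rw [norm_mul, RCLike.norm_ofReal, abs_of_nonneg (hσ i)]
    refine mul_le_mul_of_nonneg_left ?_ (hσ i)
    calc ‖⟪u i, Matrix.toEuclideanLin A (v i)⟫_𝕜‖ ≤ ‖u i‖ * (‖A‖ * ‖v i‖) :=
          (norm_inner_le_norm _ _).trans (by gcongr; exact norm_toEuclideanLin_le A (v i))
      _ = ‖A‖ := by rw [u.norm_eq_one, v.norm_eq_one, one_mul, mul_one]
  · set A₀ := Matrix.toEuclideanLin.symm (v.repr.trans u.repr.symm).toLinearEquiv.toLinearMap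
    have hA₀ : ∀ x, Matrix.toEuclideanLin A₀ x = u.repr.symm (v.repr x) := fun x => by
      simp [A₀]
    have hA₀_norm : ‖A₀‖ ≤ 1 :=
      l2_opNorm_le_of_forall zero_le_one fun x => by simp [hA₀]
    have hfA₀ : f A₀ = ((∑ i, σ i : ℝ) : 𝕜) := by
      rw [traceForm_sum_smul_outer]
      simp [hA₀, inner_self_eq_norm_sq_to_K, u.norm_eq_one]
    calc ∑ i, σ i = ‖f A₀‖ := by
          rw [hfA₀, RCLike.norm_ofReal, abs_of_nonneg (Finset.sum_nonneg fun i _ => hσ i)]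
      _ ≤ dualNorm f * ‖A₀‖ := norm_apply_le_dualNorm_mul f A₀
      _ ≤ dualNorm f := mul_le_of_le_one_right (dualNorm_nonneg f) hA₀_norm

theorem inner_toEuclideanLin_eigenvectorBasis (F : Matrix m m 𝕜) (i j : m) :
    ⟪Matrix.toEuclideanLin F ((Matrix.isHermitian_conjTranspose_mul_self F).eigenvectorBasis i),
      Matrix.toEuclideanLin F ((Matrix.isHermitian_conjTranspose_mul_self F).eigenvectorBasis j)⟫_𝕜
      = if i = j then ((Matrix.isHermitian_conjTranspose_mul_self F).eigenvalues i : 𝕜) else 0 := by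
  set hH := Matrix.isHermitian_conjTranspose_mul_self F
  have hv : Matrix.toEuclideanLin (Fᴴ * F) (hH.eigenvectorBasis j)
      = (hH.eigenvalues j : 𝕜) • hH.eigenvectorBasis j := by
    ext k
    simp [Matrix.ofLp_toLpLin, hH.mulVec_eigenvectorBasis j, RCLike.real_smul_eq_coe_mul]
  rw [← LinearMap.adjoint_inner_right, ← Matrix.toEuclideanLin_conjTranspose_eq_adjoint,
    ← LinearMap.comp_apply, ← Matrix.toLpLin_mul_same, hv, inner_smul_right,
    orthonormal_iff_ite.mp hH.eigenvectorBasis.orthonormal]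
  split_ifs with h <;> simp [h]

theorem exists_eq_sum_smul_outer (F : Matrix m m 𝕜) :
    ∃ (σ : m → ℝ) (u v : OrthonormalBasis m 𝕜 (EuclideanSpace 𝕜 m)),
      0 ≤ σ ∧ F = ∑ i, (σ i : 𝕜) • outer (u i) (v i) := by
  set hH := Matrix.isHermitian_conjTranspose_mul_self F
  set v := hH.eigenvectorBasis
  set σ : m → ℝ := fun i => √(hH.eigenvalues i)
  set T := Matrix.toEuclideanLin F
  have hσ_sq : ∀ i, ((σ i : 𝕜)) ^ 2 = hH.eigenvalues i := fun i => by
    rw [← RCLike.ofReal_pow, Real.sq_sqrt (Matrix.eigenvalues_conjTranspose_mul_self_nonneg F i)]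
  have hTv : ∀ i j, ⟪T (v i), T (v j)⟫_𝕜 = if i = j then (σ i : 𝕜) ^ 2 else 0 := fun i j => by
    rw [hσ_sq]; exact inner_toEuclideanLin_eigenvectorBasis F i j
  have hON : Orthonormal 𝕜 ({i | σ i ≠ 0}.domRestrict fun i => (σ i : 𝕜)⁻¹ • T (v i)) := by
    rw [orthonormal_iff_ite]
    rintro ⟨i, hi⟩ ⟨j, hj⟩
    simp only [Set.domRestrict_apply, inner_smul_left, inner_smul_right, hTv, Subtype.mk.injEq,
      map_inv₀, RCLike.conj_ofReal]
    split_ifs with h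
    · subst h
      field_simp [RCLike.ofReal_ne_zero.mpr hi]
    · simp
  obtain ⟨u, hu⟩ := hON.exists_orthonormalBasis_extension_of_card_eq (by simp)
  refine ⟨σ, u, v, fun i => Real.sqrt_nonneg _, Matrix.toEuclideanLin.injective ?_⟩
  refine v.toBasis.ext fun j => ?_
  rw [OrthonormalBasis.coe_toBasis, toEuclideanLin_sum_smul_outer_apply]
  by_cases hj : σ j = 0
  · have hTvj : T (v j) = 0 := by
      rw [← inner_self_eq_zero (𝕜 := 𝕜), hTv, if_pos rfl, hj]
      simp
    rw [hTvj, hj, RCLike.ofReal_zero, zero_smul]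
  · rw [hu j hj, smul_smul, mul_inv_cancel₀ (RCLike.ofReal_ne_zero.mpr hj), one_smul]

def IsExtremeFunctional (f : Matrix m m 𝕜 →ₗ[𝕜] 𝕜) : Prop :=
  ∀ f₁ f₂ : Matrix m m 𝕜 →ₗ[𝕜] 𝕜, dualNorm f₁ = 1 → dualNorm f₂ = 1 →
    f = (1 / 2 : ℝ) • (f₁ + f₂) → f = f₁ ∧ f = f₂

theorem IsExtremeFunctional.exists_eq_outer {f : Matrix m m 𝕜 →ₗ[𝕜] 𝕜} {F : Matrix m m 𝕜}
    (hext : IsExtremeFunctional f) (hfF : f = traceForm F) (hf : dualNorm f = 1) :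
    ∃ u v : EuclideanSpace 𝕜 m, ‖u‖ = 1 ∧ ‖v‖ = 1 ∧ F = outer u v := by
  obtain ⟨σ, u, v, hσ, rfl⟩ := exists_eq_sum_smul_outer F
  set g : (m → ℝ) → Matrix m m 𝕜 →ₗ[𝕜] 𝕜 := fun w => traceForm (∑ i, (w i : 𝕜) • outer (u i) (v i))
  have hsum : ∑ i, σ i = 1 := by rw [← dualNorm_traceForm_sum_smul_outer hσ u v, ← hfF, hf]
  obtain ⟨a, rfl⟩ := exists_eq_single_of_forall_perturbation hσ hsum fun τ hadd hsub hτ => by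
    have hmid : f = (1 / 2 : ℝ) • (g (σ + τ) + g (σ - τ)) := by
      refine LinearMap.ext fun A => ?_
      simp only [hfF, g, LinearMap.smul_apply, LinearMap.add_apply, traceForm_sum_smul_outer,
        ← Finset.sum_add_distrib, Finset.smul_sum, RCLike.real_smul_eq_coe_mul]
      refine Finset.sum_congr rfl fun i _ => ?_
      simp only [Pi.add_apply, Pi.sub_apply]
      push_cast
      ring
    have hnorm : ∀ w, 0 ≤ w → ∑ i, w i = 1 → dualNorm (g w) = 1 := fun w hw hw1 => by
      rw [dualNorm_traceForm_sum_smul_outer hw, hw1]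
    obtain ⟨hfadd, -⟩ := hext _ _ (hnorm _ hadd (by simp [Finset.sum_add_distrib, hsum, hτ]))
      (hnorm _ hsub (by simp [Finset.sum_sub_distrib, hsum, hτ])) hmid
    funext j
    have := congrArg (fun f => f (outer (u j) (v j))) (hfF.symm.trans hfadd)
    simp only [g, traceForm_sum_smul_outer_outer, Pi.add_apply, RCLike.ofReal_inj] at this
    simpa using this
  refine ⟨u a, v a, u.norm_eq_one a, v.norm_eq_one a, ?_⟩
  simp [Pi.single_apply]

theorem isExtremeFunctional_traceForm_outer {u v : EuclideanSpace 𝕜 m} (hu : ‖u‖ = 1)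
    (hv : ‖v‖ = 1) : IsExtremeFunctional (traceForm (outer u v)) := by
  intro f₁ f₂ h₁ h₂ hmid
  have hle : ∀ g : Matrix m m 𝕜 →ₗ[𝕜] 𝕜, dualNorm g = 1 → ‖g (outer u v)‖ ≤ 1 := fun g hg =>
    (norm_apply_le_dualNorm_mul g _).trans (by simpa [hg, hu, hv] using l2_opNorm_outer_le u v)
  have hsum : f₁ (outer u v) + f₂ (outer u v) = 2 := by
    have := congrArg (fun f => f (outer u v)) hmid
    simp only [traceForm_outer_self hu hv, LinearMap.smul_apply, LinearMap.add_apply,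
      RCLike.real_smul_eq_coe_mul] at this
    push_cast at this
    linear_combination (-2 : 𝕜) * this
  have h₁X := RCLike.eq_one_of_norm_le_one_of_add_eq_two (hle f₁ h₁) (hle f₂ h₂) hsum
  have h₂X := RCLike.eq_one_of_norm_le_one_of_add_eq_two (hle f₂ h₂) (hle f₁ h₁)
    ((add_comm _ _).trans hsum)
  exact ⟨(eq_traceForm_outer_of_apply_outer_eq_one h₁.le hu hv h₁X).symm,
    (eq_traceForm_outer_of_apply_outer_eq_one h₂.le hu hv h₂X).symm⟩

end Square

theorem stmt1 {n : ℕ} (f : Matrix (Fin n) (Fin n) 𝕜 →ₗ[𝕜] 𝕜)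
    (F : Matrix (Fin n) (Fin n) 𝕜)
    (hF : ∀ A : Matrix (Fin n) (Fin n) 𝕜, f A = Matrix.trace (Fᴴ * A))
    (hf : dualNorm f = 1) :
    (∀ f₁ f₂ : Matrix (Fin n) (Fin n) 𝕜 →ₗ[𝕜] 𝕜,
        dualNorm f₁ = 1 → dualNorm f₂ = 1 → f = (1 / 2 : ℝ) • (f₁ + f₂) →
        f = f₁ ∧ f = f₂) ↔
      ∃ u v : EuclideanSpace 𝕜 (Fin n), ‖u‖ = 1 ∧ ‖v‖ = 1 ∧ F = outer u v := by
  have hfF : f = traceForm F := LinearMap.ext hF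
  change IsExtremeFunctional f ↔ _
  refine ⟨fun hext => hext.exists_eq_outer hfF hf, ?_⟩
  rintro ⟨u, v, hu, hv, rfl⟩
  rw [hfF]
  exact isExtremeFunctional_traceForm_outer hu hv
end

section
/- Let 𝒳 ⊂ 𝔽^{n×n} (𝔽 = ℝ or ℂ) be a k-dimensional subspace, Y ∈ 𝔽^{n×n} \ 𝒳, and X_* ∈ 𝒳, and write σ₁ = ‖Y − X_*‖₂. Then X_* is a spectral approximation of Y from 𝒳 if and only if there exist an integer ℓ with 1 ≤ ℓ ≤ k+1 if 𝔽 = ℝ and 1 ≤ ℓ ≤ 2k+1 if 𝔽 = ℂ, unit vectors v_1, …, v_ℓ ∈ Σ_{Y−X_*}, and positive reals ω_1, …, ω_ℓ with ω_1 + … + ω_ℓ = 1, such that Σ_{j=1}^ℓ ω_j u_jᴴ X v_j = 0 for all X ∈ 𝒳, where the u_j are the corresponding maximal left singular vectors, i.e., (Y − X_*) v_j = σ₁ u_j for j = 1, …, ℓ. -/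
/-!
Write `T = Y - Xs` and `σ = ‖T‖`. A certificate makes `Xs` optimal by weak duality: for `X ∈ 𝒳`,
`σ = ∑ ωⱼ re ⟪uⱼ, T vⱼ⟫ = ∑ ωⱼ re ⟪uⱼ, (Y - X) vⱼ⟫ ≤ ‖Y - X‖`, where unit vectors in the span
of the maximal right singular vectors still attain `σ` because they form the eigenspace of `T†T`
for `σ²`.

Conversely, if some `Z ∈ 𝒳` had `re ⟪T v, Z v⟫ > 0` for every maximal unit vector `v`, then
`‖T - t Z‖ < σ` for small `t > 0`, contradicting optimality. In coordinates `(⟪T v, Xᵢ v⟫)ᵢ`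
with respect to a basis `Xᵢ` of `𝒳`, every real functional on `𝔽ᵏ` is `re ⟪T v, Z v⟫` for some
`Z ∈ 𝒳`, so no functional is negative on the whole compact image of the maximal unit vectors. By
Hahn–Banach `0` lies in the convex hull of this image, and Carathéodory writes it as a convex
combination of at most `dim_ℝ 𝔽ᵏ + 1` points.
-/

open Matrix

variable {𝕜 : Type*} [RCLike 𝕜]

open RCLike Filter Topology Metric

theorem IsCompact.exists_lt_forall_le_of_forall_lt {X : Type*} [TopologicalSpace X] {K : Set X}
    (hK : IsCompact K) {f : X → ℝ} (hf : ContinuousOn f K) {c : ℝ} (h : ∀ x ∈ K, f x < c) :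
    ∃ ρ < c, ∀ x ∈ K, f x ≤ ρ := by
  rcases K.eq_empty_or_nonempty with rfl | hne
  · exact ⟨c - 1, by linarith, by simp⟩
  · obtain ⟨x, hx, hmax⟩ := hK.exists_isMaxOn hne hf
    exact ⟨f x, h x hx, hmax⟩

namespace ContinuousLinearMap

section Adjoint

variable {E F : Type*} [NormedAddCommGroup E] [InnerProductSpace 𝕜 E] [CompleteSpace E]
  [NormedAddCommGroup F] [InnerProductSpace 𝕜 F] [CompleteSpace F]

theorem norm_apply_eq_iff_adjoint_comp_self_apply (T : E →L[𝕜] F) (v : E) :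
    ‖T v‖ = ‖T‖ * ‖v‖ ↔ (adjoint T ∘L T) v = ((‖T‖ ^ 2 : ℝ) : 𝕜) • v := by
  have hsq := T.apply_norm_sq_eq_inner_adjoint_left v
  set a := (adjoint T ∘L T) v
  constructor
  · intro h
    have ha : ‖a‖ ≤ ‖T‖ ^ 2 * ‖v‖ := by
      have := (adjoint T ∘L T).le_opNorm v
      rwa [T.norm_adjoint_comp_self, ← sq] at this
    have hre : re (inner 𝕜 a v) = ‖T‖ ^ 2 * ‖v‖ ^ 2 := by rw [← hsq, h, mul_pow]
    have : ‖a - ((‖T‖ ^ 2 : ℝ) : 𝕜) • v‖ ^ 2 ≤ 0 := by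
      rw [norm_sub_sq (𝕜 := 𝕜), inner_smul_right, re_ofReal_mul, hre, norm_smul, norm_ofReal,
        abs_sq]
      nlinarith [norm_nonneg a, mul_nonneg (sq_nonneg ‖T‖) (norm_nonneg v)]
    exact sub_eq_zero.1 (norm_eq_zero.1 (pow_eq_zero_iff two_ne_zero |>.1
      (le_antisymm this (sq_nonneg _))))
  · intro h
    rw [← sq_eq_sq₀ (norm_nonneg _) (by positivity), hsq, h, inner_smul_left, conj_ofReal,
      re_ofReal_mul, inner_self_eq_norm_sq, mul_pow]

theorem norm_apply_eq_of_mem_span (T : E →L[𝕜] F) {s : Set E}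
    (hs : ∀ v ∈ s, ‖T v‖ = ‖T‖ * ‖v‖) {v : E} (hv : v ∈ Submodule.span 𝕜 s) :
    ‖T v‖ = ‖T‖ * ‖v‖ := by
  let P : E →ₗ[𝕜] E := (adjoint T ∘L T : E →ₗ[𝕜] E) - ((‖T‖ ^ 2 : ℝ) : 𝕜) • LinearMap.id
  have hP : ∀ w, w ∈ LinearMap.ker P ↔ ‖T w‖ = ‖T‖ * ‖w‖ := fun w => by
    simp [P, norm_apply_eq_iff_adjoint_comp_self_apply, sub_eq_zero]
  exact (hP v).1 (Submodule.span_le.2 (fun w hw => (hP w).2 (hs w hw)) hv)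

end Adjoint

theorem sum_mul_re_inner_le_opNorm {E F : Type*} [NormedAddCommGroup E] [NormedSpace 𝕜 E]
    [NormedAddCommGroup F] [InnerProductSpace 𝕜 F] {ι : Type*} [Fintype ι] (S : E →L[𝕜] F)
    {ω : ι → ℝ} (hω : ∀ j, 0 ≤ ω j) (hω₁ : ∑ j, ω j = 1) {u : ι → F} {v : ι → E}
    (hu : ∀ j, ‖u j‖ ≤ 1) (hv : ∀ j, ‖v j‖ ≤ 1) :
    ∑ j, ω j * re (inner 𝕜 (u j) (S (v j))) ≤ ‖S‖ := by
  have hterm : ∀ j, re (inner 𝕜 (u j) (S (v j))) ≤ ‖S‖ := fun j =>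
    calc re (inner 𝕜 (u j) (S (v j))) ≤ ‖u j‖ * ‖S (v j)‖ :=
          (re_le_norm _).trans (norm_inner_le_norm _ _)
      _ ≤ 1 * ‖S‖ :=
          mul_le_mul (hu j) ((S.le_opNorm_of_le (hv j)).trans_eq (mul_one _)) (norm_nonneg _)
            zero_le_one
      _ = ‖S‖ := one_mul _
  calc ∑ j, ω j * re (inner 𝕜 (u j) (S (v j))) ≤ ∑ j, ω j * ‖S‖ :=
        Finset.sum_le_sum fun j _ => mul_le_mul_of_nonneg_left (hterm j) (hω j)
    _ = ‖S‖ := by rw [← Finset.sum_mul, hω₁, one_mul]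

section FiniteDimensional

variable {E F : Type*} [NormedAddCommGroup E] [NormedSpace 𝕜 E] [FiniteDimensional 𝕜 E]

theorem opNorm_lt_of_forall_norm_apply_lt [Nontrivial E] [NormedAddCommGroup F] [NormedSpace 𝕜 F]
    (S : E →L[𝕜] F) {c : ℝ} (h : ∀ v : E, ‖v‖ = 1 → ‖S v‖ < c) : ‖S‖ < c := by
  have := FiniteDimensional.proper_rclike 𝕜 E
  rw [← S.sSup_sphere_eq_norm, (isCompact_sphere 0 1).sSup_lt_iff_of_continuous
    (Set.nonempty_coe_sort.1 (NormedSpace.sphere_nonempty_rclike 𝕜 zero_le_one)) (by fun_prop)]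
  simpa using h

-- Compactness of the unit sphere makes the pointwise dichotomy
-- `‖T v‖ < ‖T‖ ∨ 0 < re ⟪T v, Z v⟫` uniform.
theorem exists_margin_of_forall_re_inner_pos [NormedAddCommGroup F] [InnerProductSpace 𝕜 F]
    {T Z : E →L[𝕜] F}
    (h : ∀ v : E, ‖v‖ = 1 → ‖T v‖ = ‖T‖ → 0 < re (inner 𝕜 (T v) (Z v))) :
    ∃ δ > 0, ∀ v : E, ‖v‖ = 1 →
      ‖T v‖ ^ 2 ≤ ‖T‖ ^ 2 - δ ∨ δ ≤ re (inner 𝕜 (T v) (Z v)) := by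
  have := FiniteDimensional.proper_rclike 𝕜 E
  obtain ⟨ρ, hρ, hmin⟩ := (isCompact_sphere (0 : E) 1).exists_lt_forall_le_of_forall_lt
    (f := fun v => min (‖T v‖ ^ 2 - ‖T‖ ^ 2) (-re (inner 𝕜 (T v) (Z v)))) (by fun_prop) (c := 0)
    (fun v hv => by
      rw [mem_sphere_zero_iff_norm] at hv
      have hTv : ‖T v‖ ≤ ‖T‖ := by simpa [hv] using T.le_opNorm v
      rcases hTv.lt_or_eq with hlt | heq
      · exact min_lt_of_left_lt (by nlinarith [norm_nonneg (T v)])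
      · exact min_lt_of_right_lt (neg_neg_of_pos (h v hv heq)))
  refine ⟨-ρ, neg_pos.2 hρ, fun v hv => ?_⟩
  rcases min_le_iff.1 (hmin v (mem_sphere_zero_iff_norm.2 hv)) with hshort | hinward
  · exact Or.inl (by linarith)
  · exact Or.inr (by linarith)

theorem exists_pos_norm_sub_smul_lt [Nontrivial E] [NormedAddCommGroup F] [InnerProductSpace 𝕜 F]
    {T Z : E →L[𝕜] F}
    (h : ∀ v : E, ‖v‖ = 1 → ‖T v‖ = ‖T‖ → 0 < re (inner 𝕜 (T v) (Z v))) :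
    ∃ t : ℝ, 0 < t ∧ ‖T - (t : 𝕜) • Z‖ < ‖T‖ := by
  set σ := ‖T‖
  set c := ‖Z‖
  obtain ⟨δ, hδ, hmargin⟩ := exists_margin_of_forall_re_inner_pos h
  obtain ⟨t, ⟨ht₁, ht₂⟩, ht₀⟩ : ∃ t : ℝ,
      (t * c ^ 2 < 2 * δ ∧ 2 * t * σ * c + t ^ 2 * c ^ 2 < δ) ∧ 0 < t := by
    refine (((Eventually.and ?_ ?_).filter_mono nhdsWithin_le_nhds).and
      self_mem_nhdsWithin).exists (f := 𝓝[>] (0 : ℝ))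
    · exact (Continuous.tendsto' (by fun_prop) 0 0 (by simp)).eventually_lt_const
        (by linarith)
    · exact (Continuous.tendsto' (by fun_prop) 0 0 (by simp)).eventually_lt_const hδ
  refine ⟨t, ht₀, opNorm_lt_of_forall_norm_apply_lt _ fun v hv => ?_⟩
  have hTv : ‖T v‖ ≤ σ := by simpa [hv] using T.le_opNorm v
  have hZv : ‖Z v‖ ≤ c := by simpa [hv] using Z.le_opNorm v
  have hψ : |re (inner 𝕜 (T v) (Z v))| ≤ σ * c :=
    (abs_re_le_norm _).trans ((norm_inner_le_norm _ _).trans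
      (mul_le_mul hTv hZv (norm_nonneg _) (norm_nonneg T)))
  have hexp : ‖(T - (t : 𝕜) • Z) v‖ ^ 2
      = ‖T v‖ ^ 2 - 2 * t * re (inner 𝕜 (T v) (Z v)) + t ^ 2 * ‖Z v‖ ^ 2 := by
    rw [_root_.sub_apply, _root_.smul_apply, norm_sub_sq (𝕜 := 𝕜), inner_smul_right,
      re_ofReal_mul, norm_smul, norm_ofReal, abs_of_pos ht₀]
    ring
  refine lt_of_pow_lt_pow_left₀ 2 (norm_nonneg T) ?_
  rw [hexp]
  have hZv2 : t ^ 2 * ‖Z v‖ ^ 2 ≤ t ^ 2 * c ^ 2 := by gcongr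
  rcases hmargin v hv with hshort | hinward
  · nlinarith [mul_le_mul_of_nonneg_left (abs_le.1 hψ).1 ht₀.le]
  · nlinarith [mul_lt_mul_of_pos_left ht₁ ht₀, pow_le_pow_left₀ (norm_nonneg _) hTv 2]

end FiniteDimensional

end ContinuousLinearMap

section Convex

variable {W : Type*} [NormedAddCommGroup W] [NormedSpace ℝ W] [FiniteDimensional ℝ W]

theorem exists_fin_convexCombination_of_mem_convexHull {s : Set W} {x : W}
    (hx : x ∈ convexHull ℝ s) :
    ∃ ℓ ≤ Module.finrank ℝ W + 1, ∃ (z : Fin ℓ → W) (w : Fin ℓ → ℝ),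
      (∀ i, z i ∈ s) ∧ (∀ i, 0 < w i) ∧ ∑ i, w i = 1 ∧ ∑ i, w i • z i = x := by
  obtain ⟨ι, _, z, w, hzs, hind, hw, hw₁, hwz⟩ := eq_pos_convex_span_of_mem_convexHull hx
  let e := Fintype.equivFin ι
  refine ⟨Fintype.card ι, hind.card_le_finrank_succ.trans
      (Nat.add_le_add_right (Submodule.finrank_le _) 1),
    z ∘ e.symm, w ∘ e.symm, fun i => hzs ⟨_, rfl⟩, fun i => hw _, ?_, ?_⟩
  · rw [← hw₁]; exact e.symm.sum_comp w
  · rw [← hwz]; exact e.symm.sum_comp fun i => w i • z i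

-- By Carathéodory the hull is a finite union of continuous images of `simplex × Kˡ`.
theorem IsCompact.isCompact_convexHull {K : Set W} (hK : IsCompact K) :
    IsCompact (convexHull ℝ K) := by
  let Φ : (ℓ : ℕ) → (Fin ℓ → ℝ) × (Fin ℓ → W) → W := fun ℓ p => ∑ i, p.1 i • p.2 i
  have hhull : convexHull ℝ K = ⋃ ℓ ∈ Finset.range (Module.finrank ℝ W + 2),
      Φ ℓ '' (stdSimplex ℝ (Fin ℓ) ×ˢ Set.univ.pi fun _ => K) := by
    refine subset_antisymm (fun x hx => ?_) ?_
    · obtain ⟨ℓ, hℓ, z, w, hz, hw, hw₁, rfl⟩ := exists_fin_convexCombination_of_mem_convexHull hx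
      exact Set.mem_biUnion (Finset.mem_range.2 (by omega))
        ⟨(w, z), ⟨⟨fun i => (hw i).le, hw₁⟩, fun i _ => hz i⟩, rfl⟩
    · simp only [Set.iUnion_subset_iff]
      rintro ℓ - _ ⟨⟨w, z⟩, ⟨⟨hw, hw₁⟩, hz⟩, rfl⟩
      exact (convex_convexHull ℝ K).sum_mem (fun i _ => hw i) hw₁
        fun i _ => subset_convexHull ℝ K (hz i trivial)
  rw [hhull]
  exact Finset.isCompact_biUnion _ fun ℓ _ =>
    ((isCompact_stdSimplex ℝ _).prod (isCompact_univ_pi fun _ => hK)).image (by fun_prop)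

theorem zero_mem_convexHull_of_forall_exists_nonneg {K : Set W} (hK : IsCompact K)
    (h : ∀ f : StrongDual ℝ W, ∃ x ∈ K, 0 ≤ f x) : (0 : W) ∈ convexHull ℝ K := by
  by_contra h₀
  obtain ⟨f, s, hfs, hs⟩ :=
    geometric_hahn_banach_closed_point (convex_convexHull ℝ K) hK.isCompact_convexHull.isClosed h₀
  obtain ⟨x, hx, hfx⟩ := h f
  have := hfs x (subset_convexHull ℝ K hx)
  rw [map_zero] at hs
  linarith

end Convex

theorem StrongDual.exists_eq_re_sum_mul {ι : Type*} [Fintype ι] (f : StrongDual ℝ (ι → 𝕜)) :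
    ∃ γ : ι → 𝕜, ∀ w, f w = re (∑ i, γ i * w i) := by
  classical
  let F : StrongDual 𝕜 (ι → 𝕜) := StrongDual.extendRCLike f
  refine ⟨fun i => F fun j => if i = j then 1 else 0, fun w => ?_⟩
  rw [← StrongDual.re_extendRCLike_apply (𝕜 := 𝕜) f w]
  change re ((F : (ι → 𝕜) →ₗ[𝕜] 𝕜) w) = _
  rw [LinearMap.pi_apply_eq_sum_univ]
  simp [F, mul_comm]

section Matrix

variable {m : Type*} [Fintype m] [DecidableEq m]

theorem specNorm_eq_norm_toEuclideanCLM (A : Matrix m m 𝕜) :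
    specNorm A = ‖toEuclideanCLM (n := m) (𝕜 := 𝕜) A‖ := by
  rw [specNorm, ← ContinuousLinearMap.sSup_sphere_eq_norm]
  congr 1
  ext r
  simp only [Set.mem_ofPred_eq, Set.mem_image, mem_sphere_zero_iff_norm, eq_comm]
  rfl

theorem specNorm_nonneg (A : Matrix m m 𝕜) : 0 ≤ specNorm A := by
  rw [specNorm_eq_norm_toEuclideanCLM]
  exact norm_nonneg _

theorem specNorm_pos {A : Matrix m m 𝕜} (hA : A ≠ 0) : 0 < specNorm A := by
  simpa [specNorm_eq_norm_toEuclideanCLM] using hA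

theorem norm_toEuclideanLin_of_mem_maxRSV {M : Matrix m m 𝕜} {v : EuclideanSpace 𝕜 m}
    (hv : v ∈ maxRSV M) : ‖toEuclideanLin M v‖ = specNorm M * ‖v‖ := by
  rw [maxRSV, specNorm_eq_norm_toEuclideanCLM] at hv
  rw [specNorm_eq_norm_toEuclideanCLM]
  exact (toEuclideanCLM (n := m) (𝕜 := 𝕜) M).norm_apply_eq_of_mem_span
    (fun w hw => by rw [hw.1, mul_one]; exact hw.2) hv

def innerApplyₗ (u v : EuclideanSpace 𝕜 m) : Matrix m m 𝕜 →ₗ[𝕜] 𝕜 where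
  toFun X := inner 𝕜 u (toEuclideanLin X v)
  map_add' X X' := by simp [inner_add_right]
  map_smul' c X := by simp [inner_smul_right]

@[simp]
theorem innerApplyₗ_apply (u v : EuclideanSpace 𝕜 m) (X : Matrix m m 𝕜) :
    innerApplyₗ u v X = inner 𝕜 u (toEuclideanLin X v) := rfl

variable {𝒳 : Submodule 𝕜 (Matrix m m 𝕜)} {Y Xs : Matrix m m 𝕜}

theorem isSpectralApprox_of_certificate (hXs : Xs ∈ 𝒳) {ι : Type*} [Fintype ι]
    {u v : ι → EuclideanSpace 𝕜 m} {ω : ι → ℝ} (hv : ∀ j, v j ∈ maxRSV (Y - Xs))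
    (hv₁ : ∀ j, ‖v j‖ = 1)
    (huv : ∀ j, toEuclideanLin (Y - Xs) (v j) = specNorm (Y - Xs) • u j)
    (hω : ∀ j, 0 ≤ ω j) (hω₁ : ∑ j, ω j = 1)
    (hcert : ∀ X ∈ 𝒳, ∑ j, (ω j : 𝕜) * inner 𝕜 (u j) (toEuclideanLin X (v j)) = 0) :
    IsSpectralApprox 𝒳 Y Xs := by
  refine ⟨hXs, fun X hX => ?_⟩
  rcases (specNorm_nonneg (Y - Xs)).eq_or_lt with hσ | hσ
  · exact hσ ▸ specNorm_nonneg _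
  have hu : ∀ j, ‖u j‖ = 1 := fun j => by
    have := norm_toEuclideanLin_of_mem_maxRSV (hv j)
    rw [huv j, hv₁ j, mul_one, norm_smul, Real.norm_of_nonneg hσ.le] at this
    exact (mul_eq_left₀ hσ.ne').1 this
  have hattain : ∀ j, re (inner 𝕜 (u j) (toEuclideanLin (Y - Xs) (v j))) = specNorm (Y - Xs) :=
      fun j => by
    rw [huv j, RCLike.real_smul_eq_coe_smul (K := 𝕜), inner_smul_right, re_ofReal_mul,
      inner_self_eq_norm_sq, hu j]
    ring
  have hcert' : ∑ j, ω j * re (inner 𝕜 (u j) (toEuclideanLin (X - Xs) (v j))) = 0 := by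
    simpa [re_ofReal_mul] using congrArg re (hcert _ (sub_mem hX hXs))
  calc specNorm (Y - Xs) = ∑ j, ω j * re (inner 𝕜 (u j) (toEuclideanLin (Y - Xs) (v j))) := by
        simp only [hattain, ← Finset.sum_mul, hω₁, one_mul]
    _ = ∑ j, ω j * re (inner 𝕜 (u j) (toEuclideanLin (Y - X) (v j)))
        + ∑ j, ω j * re (inner 𝕜 (u j) (toEuclideanLin (X - Xs) (v j))) := by
        rw [← Finset.sum_add_distrib]
        refine Finset.sum_congr rfl fun j _ => ?_
        rw [← mul_add, ← map_add, ← inner_add_right, ← LinearMap.add_apply, ← map_add,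
          sub_add_sub_cancel]
    _ ≤ specNorm (Y - X) := by
        rw [hcert', add_zero, specNorm_eq_norm_toEuclideanCLM]
        exact (toEuclideanCLM (n := m) (𝕜 := 𝕜) (Y - X)).sum_mul_re_inner_le_opNorm hω hω₁
          (fun j => (hu j).le) (fun j => (hv₁ j).le)

theorem IsSpectralApprox.exists_re_inner_nonpos [Nonempty m] (h : IsSpectralApprox 𝒳 Y Xs)
    {Z : Matrix m m 𝕜} (hZ : Z ∈ 𝒳) :
    ∃ v : EuclideanSpace 𝕜 m, ‖v‖ = 1 ∧ ‖toEuclideanLin (Y - Xs) v‖ = specNorm (Y - Xs) ∧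
      re (inner 𝕜 (toEuclideanLin (Y - Xs) v) (toEuclideanLin Z v)) ≤ 0 := by
  by_contra! hpos
  obtain ⟨t, ht, hlt⟩ := (toEuclideanCLM (n := m) (𝕜 := 𝕜) (Y - Xs)).exists_pos_norm_sub_smul_lt
    (Z := toEuclideanCLM (n := m) (𝕜 := 𝕜) Z)
    fun v hv hTv => hpos v hv (by rwa [specNorm_eq_norm_toEuclideanCLM])
  have hstep : specNorm (Y - (Xs + (t : 𝕜) • Z)) = ‖toEuclideanCLM (n := m) (𝕜 := 𝕜) (Y - Xs)
      - (t : 𝕜) • toEuclideanCLM (n := m) (𝕜 := 𝕜) Z‖ := by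
    rw [specNorm_eq_norm_toEuclideanCLM, ← map_smul, ← map_sub, sub_add_eq_sub_sub]
  have := h.2 (Xs + (t : 𝕜) • Z) (add_mem h.1 (Submodule.smul_mem _ _ hZ))
  rw [hstep, specNorm_eq_norm_toEuclideanCLM] at this
  linarith

theorem IsSpectralApprox.exists_nonneg_apply [Nonempty m] (h : IsSpectralApprox 𝒳 Y Xs)
    {ι : Type*} [Fintype ι] {B : ι → Matrix m m 𝕜} (hB : ∀ i, B i ∈ 𝒳)
    (f : StrongDual ℝ (ι → 𝕜)) :
    ∃ v : EuclideanSpace 𝕜 m, ‖v‖ = 1 ∧ ‖toEuclideanLin (Y - Xs) v‖ = specNorm (Y - Xs) ∧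
      0 ≤ f fun i => inner 𝕜 (toEuclideanLin (Y - Xs) v) (toEuclideanLin (B i) v) := by
  obtain ⟨γ, hγ⟩ := f.exists_eq_re_sum_mul
  obtain ⟨v, hv₁, hvσ, hre⟩ := h.exists_re_inner_nonpos
    (neg_mem (sum_mem fun i _ => Submodule.smul_mem _ (γ i) (hB i)))
  refine ⟨v, hv₁, hvσ, ?_⟩
  have : innerApplyₗ (toEuclideanLin (Y - Xs) v) v (-∑ i, γ i • B i)
      = -∑ i, γ i * inner 𝕜 (toEuclideanLin (Y - Xs) v) (toEuclideanLin (B i) v) := by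
    simp only [map_neg, map_sum, map_smul, smul_eq_mul, innerApplyₗ_apply]
  rw [hγ, ← neg_nonpos, ← map_neg, ← this]
  exact hre

theorem IsSpectralApprox.exists_certificate (h : IsSpectralApprox 𝒳 Y Xs)
    (hσ : 0 < specNorm (Y - Xs)) {ι : Type*} [Fintype ι] {B : ι → Matrix m m 𝕜}
    (hB : Submodule.span 𝕜 (Set.range B) = 𝒳) :
    ∃ ℓ : ℕ, 1 ≤ ℓ ∧ ℓ ≤ Module.finrank ℝ 𝕜 * Fintype.card ι + 1 ∧
      ∃ (u v : Fin ℓ → EuclideanSpace 𝕜 m) (ω : Fin ℓ → ℝ),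
        (∀ j, v j ∈ maxRSV (Y - Xs)) ∧ (∀ j, ‖v j‖ = 1) ∧
        (∀ j, toEuclideanLin (Y - Xs) (v j) = specNorm (Y - Xs) • u j) ∧
        (∀ j, 0 < ω j) ∧ (∑ j, ω j = 1) ∧
        (∀ X ∈ 𝒳, ∑ j, (ω j : 𝕜) * inner 𝕜 (u j) (toEuclideanLin X (v j)) = 0) := by
  have : Nonempty m := by
    by_contra hm
    rw [not_nonempty_iff] at hm
    simp [Subsingleton.elim (Y - Xs) 0, specNorm_eq_norm_toEuclideanCLM] at hσ
  set M := Y - Xs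
  set σ := specNorm M
  let S : Set (EuclideanSpace 𝕜 m) := sphere 0 1 ∩ {v | ‖toEuclideanLin M v‖ = σ}
  let g : EuclideanSpace 𝕜 m → ι → 𝕜 :=
    fun v i => inner 𝕜 (toEuclideanLin M v) (toEuclideanLin (B i) v)
  have hS : IsCompact S := (isCompact_sphere 0 1).inter_right
    (isClosed_eq (LinearMap.continuous_of_finiteDimensional _).norm continuous_const)
  have hg : Continuous g := continuous_pi fun i =>
    (LinearMap.continuous_of_finiteDimensional (toEuclideanLin M)).inner
      (LinearMap.continuous_of_finiteDimensional (toEuclideanLin (B i)))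
  have hnonneg : ∀ f : StrongDual ℝ (ι → 𝕜), ∃ x ∈ g '' S, 0 ≤ f x := fun f => by
    obtain ⟨v, hv₁, hvσ, hf⟩ :=
      h.exists_nonneg_apply (fun i => hB ▸ Submodule.subset_span (Set.mem_range_self i)) f
    exact ⟨g v, ⟨v, ⟨mem_sphere_zero_iff_norm.2 hv₁, hvσ⟩, rfl⟩, hf⟩
  obtain ⟨ℓ, hℓ, z, w, hz, hw, hw₁, hwz⟩ := exists_fin_convexCombination_of_mem_convexHull
    (zero_mem_convexHull_of_forall_exists_nonneg (hS.image hg) hnonneg)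
  choose v hvS hvz using hz
  let L : Matrix m m 𝕜 →ₗ[𝕜] 𝕜 := ∑ j, (w j : 𝕜) • innerApplyₗ (toEuclideanLin M (v j)) (v j)
  have hL : ∀ X,
      L X = ∑ j, (w j : 𝕜) * inner 𝕜 (toEuclideanLin M (v j)) (toEuclideanLin X (v j)) :=
    fun X => by simp [L, RCLike.real_smul_eq_coe_mul]
  have hker : 𝒳 ≤ LinearMap.ker L := hB ▸ Submodule.span_le.2 (Set.range_subset_iff.2 fun i =>
    calc L (B i) = (∑ j, w j • g (v j)) i := by
          simp [hL, g, Finset.sum_apply, RCLike.real_smul_eq_coe_mul]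
      _ = 0 := by simp only [hvz, hwz, Pi.zero_apply])
  refine ⟨ℓ, Nat.one_le_iff_ne_zero.2 ?_, ?_, fun j => σ⁻¹ • toEuclideanLin M (v j), v, w,
    fun j => Submodule.subset_span ⟨mem_sphere_zero_iff_norm.1 (hvS j).1, (hvS j).2⟩,
    fun j => mem_sphere_zero_iff_norm.1 (hvS j).1, fun j => (smul_inv_smul₀ hσ.ne' _).symm,
    hw, hw₁, fun X hX => ?_⟩
  · rintro rfl
    simp at hw₁
  · simpa [Module.finrank_pi_fintype, mul_comm] using hℓ
  · have := hL X ▸ LinearMap.mem_ker.1 (hker hX)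
    simp only [RCLike.real_smul_eq_coe_smul (K := 𝕜), inner_smul_left, conj_ofReal,
      mul_left_comm _ ((σ⁻¹ : ℝ) : 𝕜), ← Finset.mul_sum, this, mul_zero]

end Matrix

theorem stmt3 {n k : ℕ} (𝒳 : Submodule 𝕜 (Matrix (Fin n) (Fin n) 𝕜))
    (hdim : Module.finrank 𝕜 𝒳 = k)
    (Y Xs : Matrix (Fin n) (Fin n) 𝕜) (hY : Y ∉ 𝒳) (hXs : Xs ∈ 𝒳) :
    IsSpectralApprox 𝒳 Y Xs ↔
      ∃ ℓ : ℕ, 1 ≤ ℓ ∧ ℓ ≤ Module.finrank ℝ 𝕜 * k + 1 ∧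
        ∃ (u v : Fin ℓ → EuclideanSpace 𝕜 (Fin n)) (ω : Fin ℓ → ℝ),
          (∀ j, v j ∈ maxRSV (Y - Xs)) ∧ (∀ j, ‖v j‖ = 1) ∧
          (∀ j, Matrix.toEuclideanLin (Y - Xs) (v j) = specNorm (Y - Xs) • u j) ∧
          (∀ j, 0 < ω j) ∧ (∑ j, ω j = 1) ∧
          (∀ X ∈ 𝒳, ∑ j, (ω j : 𝕜) * (inner 𝕜 (u j) (Matrix.toEuclideanLin X (v j)) : 𝕜) = 0) := by
  refine ⟨fun h => ?_, fun ⟨_, _, _, _, _, _, hv, hv₁, huv, hω, hω₁, hcert⟩ =>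
    isSpectralApprox_of_certificate hXs hv hv₁ huv (fun j => (hω j).le) hω₁ hcert⟩
  let b := Module.finBasisOfFinrankEq 𝕜 𝒳 hdim
  have hb : Submodule.span 𝕜 (Set.range (𝒳.subtype ∘ b)) = 𝒳 := by
    rw [Set.range_comp, Submodule.span_image, b.span_eq, Submodule.map_top, Submodule.range_subtype]
  have := h.exists_certificate (specNorm_pos (sub_ne_zero.2 fun hYX => hY (hYX ▸ hXs))) hb
  rwa [Fintype.card_fin] at this
end

section
/- Let 𝒳 ⊂ 𝔽^{n×n} (𝔽 = ℝ or ℂ) be a subspace and w ∈ 𝔽^n a unit vector such that Xw = 0 for every X ∈ 𝒳. Let Y ∈ 𝔽^{n×n} \ 𝒳 satisfy Yw = ‖Y‖₂ w. Then min_{X∈𝒳} ‖Y − X‖₂ = ‖Y‖₂, i.e., the zero matrix is a spectral approximation of Y from 𝒳. -/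
open Matrix

variable {𝕜 : Type*} [RCLike 𝕜]

section SpecNorm

variable {m : Type*} [Fintype m] [DecidableEq m]

lemma specNorm_bddAbove (A : Matrix m m 𝕜) :
    BddAbove {r : ℝ | ∃ v : EuclideanSpace 𝕜 m, ‖v‖ = 1 ∧ r = ‖Matrix.toEuclideanLin A v‖} := by
  refine ⟨‖(Matrix.toEuclideanLin A).toContinuousLinearMap‖, ?_⟩
  rintro r ⟨v, hv, rfl⟩
  simpa [hv] using (Matrix.toEuclideanLin A).toContinuousLinearMap.le_opNorm v

lemma norm_toEuclideanLin_le_specNorm (A : Matrix m m 𝕜) {v : EuclideanSpace 𝕜 m}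
    (hv : ‖v‖ = 1) : ‖Matrix.toEuclideanLin A v‖ ≤ specNorm A :=
  le_csSup (specNorm_bddAbove A) ⟨v, hv, rfl⟩

lemma specNorm_nonneg_of_norm_eq_one (A : Matrix m m 𝕜) {v : EuclideanSpace 𝕜 m}
    (hv : ‖v‖ = 1) : 0 ≤ specNorm A :=
  (norm_nonneg _).trans (norm_toEuclideanLin_le_specNorm A hv)

lemma specNorm_le_specNorm_sub {Y X : Matrix m m 𝕜} {w : EuclideanSpace 𝕜 m} (hw : ‖w‖ = 1)
    (hYw : ‖Matrix.toEuclideanLin Y w‖ = specNorm Y) (hXw : Matrix.toEuclideanLin X w = 0) :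
    specNorm Y ≤ specNorm (Y - X) := by
  have hsub : Matrix.toEuclideanLin (Y - X) w = Matrix.toEuclideanLin Y w := by
    rw [map_sub, LinearMap.sub_apply, hXw, sub_zero]
  calc specNorm Y = ‖Matrix.toEuclideanLin (Y - X) w‖ := by rw [hsub, hYw]
    _ ≤ specNorm (Y - X) := norm_toEuclideanLin_le_specNorm _ hw

end SpecNorm

theorem stmt7_general {n : ℕ} (𝒳 : Submodule 𝕜 (Matrix (Fin n) (Fin n) 𝕜))
    (w : EuclideanSpace 𝕜 (Fin n)) (hw : ‖w‖ = 1)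
    (hker : ∀ X ∈ 𝒳, Matrix.toEuclideanLin X w = 0)
    (Y : Matrix (Fin n) (Fin n) 𝕜)
    (hYw : Matrix.toEuclideanLin Y w = specNorm Y • w) :
    IsSpectralApprox 𝒳 Y 0 ∧ specNorm (Y - 0) = specNorm Y := by
  have hYw_norm : ‖Matrix.toEuclideanLin Y w‖ = specNorm Y := by
    rw [hYw, norm_smul, hw, mul_one, Real.norm_of_nonneg (specNorm_nonneg_of_norm_eq_one Y hw)]
  refine ⟨⟨𝒳.zero_mem, fun X hX => ?_⟩, by rw [sub_zero]⟩
  rw [sub_zero]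
  exact specNorm_le_specNorm_sub hw hYw_norm (hker X hX)

theorem stmt7 {n : ℕ} (𝒳 : Submodule 𝕜 (Matrix (Fin n) (Fin n) 𝕜))
    (w : EuclideanSpace 𝕜 (Fin n)) (hw : ‖w‖ = 1)
    (hker : ∀ X ∈ 𝒳, Matrix.toEuclideanLin X w = 0)
    (Y : Matrix (Fin n) (Fin n) 𝕜) (hY : Y ∉ 𝒳)
    (hYw : Matrix.toEuclideanLin Y w = specNorm Y • w) :
    IsSpectralApprox 𝒳 Y 0 ∧ specNorm (Y - 0) = specNorm Y :=
  stmt7_general 𝒳 w hw hker Y hYw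
end

section
/- Let 𝒳 = span{X_1, …, X_k} ⊂ 𝔽^{n×n} (𝔽 = ℝ or ℂ) be a k-dimensional subspace and let X_* ∈ 𝒳 be a spectral approximation of Y ∈ 𝔽^{n×n} \ 𝒳. Define A_i = (Y − X_*)ᴴ X_i for i = 1, …, k. If the set 𝓕(A_1, …, A_k; Σ_{Y−X_*}) is convex, then max_{‖v‖₂=1} min_{X∈𝒳} ‖(Y − X)v‖₂ = min_{X∈𝒳} ‖Y − X‖₂. -/
/-!
Write `M = Y - Xs` and `σ = ‖M‖₂`. The min-max value is `σ`, and every inner minimum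
`min_X ‖(Y - X) v‖` is at most `‖M v‖ ≤ σ`. If `0` were not in the (compact, convex) field,
a separating functional would give `E = ∑ dᵢ Xᵢ ∈ 𝒳` with `re ⟪M v, E v⟫ ≥ δ > 0` on every
maximal right singular unit vector `v`; a compactness argument then gives `‖M - t E‖₂ < σ` for
small `t > 0`, contradicting optimality of `Xs`. So some unit `v ∈ Σ_M` has `⟪M v, Xᵢ v⟫ = 0`
for all `i`. The vectors on which a linear map attains its norm form a subspace (parallelogram
law), so `‖M v‖ = σ`, and by Pythagoras `‖(Y - X) v‖ ≥ ‖M v‖ = σ` for every `X ∈ 𝒳`.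
-/

open Matrix

variable {𝕜 : Type*} [RCLike 𝕜]

open Metric RCLike Filter Topology
open scoped InnerProductSpace

theorem IsCompact.exists_lt_forall_le {β : Type*} [TopologicalSpace β] {K : Set β}
    (hK : IsCompact K) {f : β → ℝ} (hf : Continuous f) {a : ℝ} (h : ∀ x ∈ K, f x < a) :
    ∃ c < a, ∀ x ∈ K, f x ≤ c := by
  rcases K.eq_empty_or_nonempty with rfl | hne
  · exact ⟨a - 1, by linarith, by simp⟩
  · obtain ⟨x, hx, hmax⟩ := hK.exists_isMaxOn hne hf.continuousOn
    exact ⟨f x, h x hx, hmax⟩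

namespace ContinuousLinearMap

section Normed

variable {E F : Type*} [NormedAddCommGroup E] [NormedSpace 𝕜 E] [NormedAddCommGroup F]
  [NormedSpace 𝕜 F]

theorem exists_mem_sphere_norm_apply_eq [FiniteDimensional 𝕜 E] [Nontrivial E]
    (T : E →L[𝕜] F) : ∃ x ∈ sphere (0 : E) 1, ‖T x‖ = ‖T‖ := by
  have := FiniteDimensional.proper_rclike 𝕜 E
  obtain ⟨x, hx, hmax⟩ := (isCompact_sphere (0 : E) 1).exists_isMaxOn
    (Set.nonempty_coe_sort.1 (NormedSpace.sphere_nonempty_rclike 𝕜 zero_le_one))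
    (by fun_prop : Continuous (‖T ·‖)).continuousOn
  refine ⟨x, hx, ?_⟩
  rw [← T.sSup_sphere_eq_norm]
  exact (IsGreatest.csSup_eq
    ⟨Set.mem_image_of_mem _ hx, Set.forall_mem_image.2 (isMaxOn_iff.1 hmax)⟩).symm

end Normed

section Inner

variable {E F : Type*} [NormedAddCommGroup E] [InnerProductSpace 𝕜 E] [NormedAddCommGroup F]
  [InnerProductSpace 𝕜 F]

def normAttainingSubspace (T : E →L[𝕜] F) : Submodule 𝕜 E where
  carrier := {x | ‖T x‖ = ‖T‖ * ‖x‖}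
  zero_mem' := by simp
  smul_mem' c x hx := by
    simp only [Set.mem_ofPred_eq, map_smul, norm_smul] at hx ⊢
    rw [hx]; ring
  add_mem' {x y} hx hy := by
    simp only [Set.mem_ofPred_eq] at hx hy ⊢
    -- the parallelogram law and `‖T (x - y)‖ ≤ ‖T‖ * ‖x - y‖` force equality at `x + y`
    have hpT := parallelogram_law_with_norm 𝕜 (T x) (T y)
    have hp := parallelogram_law_with_norm 𝕜 x y
    rw [← map_add, ← map_sub, hx, hy] at hpT
    have hsub := pow_le_pow_left₀ (norm_nonneg _) (T.le_opNorm (x - y)) 2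
    have hsq : ‖T (x + y)‖ ^ 2 = (‖T‖ * ‖x + y‖) ^ 2 := by
      refine le_antisymm (pow_le_pow_left₀ (norm_nonneg _) (T.le_opNorm _) 2) ?_
      linear_combination hsub - hpT + ‖T‖ ^ 2 * hp
    exact (sq_eq_sq₀ (norm_nonneg _) (by positivity)).1 hsq

theorem mem_normAttainingSubspace {T : E →L[𝕜] F} {x : E} :
    x ∈ T.normAttainingSubspace ↔ ‖T x‖ = ‖T‖ * ‖x‖ := Iff.rfl

theorem exists_norm_sub_smul_lt [FiniteDimensional 𝕜 E] [Nontrivial E] (T S : E →L[𝕜] F)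
    {δ : ℝ} (hδ : 0 < δ) (h : ∀ x ∈ sphere (0 : E) 1, ‖T x‖ = ‖T‖ → δ ≤ re ⟪T x, S x⟫_𝕜) :
    ∃ t : ℝ, 0 < t ∧ ‖T - (t : 𝕜) • S‖ < ‖T‖ := by
  have := FiniteDimensional.proper_rclike 𝕜 E
  have hcont : Continuous fun x => re ⟪T x, S x⟫_𝕜 := by fun_prop
  set K := sphere (0 : E) 1 ∩ {x | re ⟪T x, S x⟫_𝕜 ≤ δ / 2}
  have hK : IsCompact K :=
    (isCompact_sphere 0 1).inter_right (isClosed_le hcont continuous_const)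
  obtain ⟨c, hcT, hc⟩ := hK.exists_lt_forall_le (f := fun x => ‖T x‖) (by fun_prop) fun x hx => by
    refine (T.unit_le_opNorm x (mem_sphere_zero_iff_norm.1 hx.1).le).lt_of_ne fun heq => ?_
    linarith [h x hx.1 heq, hx.2.out]
  have hsmall : ∀ᶠ t in 𝓝[>] (0 : ℝ), 0 < t ∧ t * ‖S‖ < ‖T‖ - c ∧ t * ‖S‖ ^ 2 < δ := by
    refine (eventually_mem_nhdsWithin (a := (0 : ℝ))).and (Filter.Eventually.and ?_ ?_) <;>
      refine nhdsWithin_le_nhds (ContinuousAt.eventually_lt (by fun_prop) continuousAt_const ?_)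
    · simpa using hcT
    · simpa using hδ
  obtain ⟨t, ht, htc, htδ⟩ := hsmall.exists
  refine ⟨t, ht, ?_⟩
  obtain ⟨x, hx, hxT⟩ := (T - (t : 𝕜) • S).exists_mem_sphere_norm_apply_eq
  rw [← hxT, _root_.sub_apply, _root_.smul_apply]
  have hx1 : ‖x‖ = 1 := mem_sphere_zero_iff_norm.1 hx
  have hTx : ‖T x‖ ≤ ‖T‖ := T.unit_le_opNorm x hx1.le
  have hSx : ‖S x‖ ≤ ‖S‖ := S.unit_le_opNorm x hx1.le
  have hnorm : ‖(t : 𝕜) • S x‖ = t * ‖S x‖ := by rw [norm_smul, norm_ofReal, abs_of_pos ht]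
  by_cases hxK : re ⟪T x, S x⟫_𝕜 ≤ δ / 2
  · calc ‖T x - (t : 𝕜) • S x‖ ≤ ‖T x‖ + t * ‖S x‖ := hnorm ▸ norm_sub_le _ _
      _ ≤ c + t * ‖S‖ := add_le_add (hc x ⟨hx, hxK⟩) (by gcongr)
      _ < ‖T‖ := by linarith
  · refine lt_of_pow_lt_pow_left₀ 2 (norm_nonneg T) ?_
    rw [norm_sub_sq (𝕜 := 𝕜), hnorm, inner_smul_right, re_ofReal_mul]
    have hT2 : ‖T x‖ ^ 2 ≤ ‖T‖ ^ 2 := by gcongr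
    have hS2 : (t * ‖S x‖) ^ 2 < t * δ := by
      calc (t * ‖S x‖) ^ 2 ≤ t * (t * ‖S‖ ^ 2) := by rw [mul_pow, sq t, mul_assoc]; gcongr
        _ < t * δ := by gcongr
    nlinarith

end Inner

end ContinuousLinearMap

theorem exists_re_dotProduct_eq {ι : Type*} [Fintype ι] [DecidableEq ι]
    (f : (ι → 𝕜) →L[ℝ] ℝ) : ∃ d : ι → 𝕜, ∀ w, f w = re (d ⬝ᵥ w) := by
  refine ⟨fun i => (f (Pi.single i 1) : 𝕜) - (f (Pi.single i I) : 𝕜) * I, fun w => ?_⟩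
  conv_lhs => rw [← Finset.univ_sum_single w, map_sum]
  rw [dotProduct, map_sum]
  refine Finset.sum_congr rfl fun i _ => ?_
  have hsplit : Pi.single i (w i) = re (w i) • (Pi.single i 1 : ι → 𝕜)
      + im (w i) • (Pi.single i I : ι → 𝕜) := by
    rw [← Pi.single_smul, ← Pi.single_smul, ← Pi.single_add, real_smul_eq_coe_mul,
      real_smul_eq_coe_mul, mul_one, re_add_im]
  rw [hsplit, map_add, f.map_smul, f.map_smul, smul_eq_mul, smul_eq_mul, sub_mul, map_sub,
    mul_assoc, re_ofReal_mul, re_ofReal_mul, I_mul_re]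
  ring

theorem Convex.exists_lt_re_dotProduct {ι : Type*} [Fintype ι] [DecidableEq ι]
    {s : Set (ι → 𝕜)} (hconv : Convex ℝ s) (hs : IsClosed s) (h0 : 0 ∉ s) :
    ∃ d : ι → 𝕜, ∃ δ > 0, ∀ w ∈ s, δ < re (d ⬝ᵥ w) := by
  obtain ⟨f, δ, hf0, hf⟩ := geometric_hahn_banach_point_closed hconv hs h0
  obtain ⟨d, hd⟩ := exists_re_dotProduct_eq f
  exact ⟨d, δ, by simpa using hf0, fun w hw => hd w ▸ hf w hw⟩

namespace Matrix

variable {m : Type*} [Fintype m] [DecidableEq m]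

theorem specNorm_eq_norm_toEuclideanCLM (A : Matrix m m 𝕜) :
    specNorm A = ‖toEuclideanCLM (𝕜 := 𝕜) A‖ := by
  rw [← ContinuousLinearMap.sSup_sphere_eq_norm, specNorm]
  congr 1
  ext r
  simp only [Set.mem_ofPred_eq, Set.mem_image, mem_sphere_zero_iff_norm, eq_comm (a := r)]
  rfl

theorem norm_toEuclideanLin_of_mem_maxRSV {M : Matrix m m 𝕜} {v : EuclideanSpace 𝕜 m}
    (hv : v ∈ maxRSV M) : ‖toEuclideanLin M v‖ = specNorm M * ‖v‖ := by
  refine (Submodule.span_le.2 ?_ hv : v ∈ (toEuclideanCLM (𝕜 := 𝕜) M).normAttainingSubspace)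
    |>.trans (by rw [specNorm_eq_norm_toEuclideanCLM])
  rintro u ⟨hu1, hu⟩
  rw [SetLike.mem_coe, ContinuousLinearMap.mem_normAttainingSubspace, hu1, mul_one,
    ← specNorm_eq_norm_toEuclideanCLM]
  exact hu

theorem inner_toEuclideanLin_conjTranspose_mul (M B : Matrix m m 𝕜) (x y : EuclideanSpace 𝕜 m) :
    ⟪x, toEuclideanLin (Mᴴ * B) y⟫_𝕜 = ⟪toEuclideanLin M x, toEuclideanLin B y⟫_𝕜 := by
  change ⟪x, toEuclideanCLM (𝕜 := 𝕜) (Mᴴ * B) y⟫_𝕜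
    = ⟪toEuclideanCLM (𝕜 := 𝕜) M x, toEuclideanCLM (𝕜 := 𝕜) B y⟫_𝕜
  rw [map_mul, ← star_eq_conjTranspose, map_star, mul_apply_eq_comp,
    ContinuousLinearMap.star_eq_adjoint, ContinuousLinearMap.adjoint_inner_right]

theorem isCompact_kField {k : ℕ} (A : Fin k → Matrix m m 𝕜)
    (S : Submodule 𝕜 (EuclideanSpace 𝕜 m)) : IsCompact (kField A S) := by
  have hS : IsCompact ((S : Set (EuclideanSpace 𝕜 m)) ∩ sphere 0 1) :=
    (isCompact_sphere 0 1).inter_left S.closed_of_finiteDimensional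
  convert hS.image (f := fun v i => ⟪v, toEuclideanLin (A i) v⟫_𝕜) (by fun_prop) using 1
  ext w
  simp only [kField, Set.mem_image, Set.mem_inter_iff, mem_sphere_zero_iff_norm, SetLike.mem_coe]
  exact ⟨fun ⟨v, hS, h1, hw⟩ => ⟨v, ⟨hS, h1⟩, hw.symm⟩,
    fun ⟨v, ⟨hS, h1⟩, hw⟩ => ⟨v, hS, h1, hw.symm⟩⟩

theorem dotProduct_inner_conjTranspose_mul {k : ℕ} (M : Matrix m m 𝕜) (X : Fin k → Matrix m m 𝕜)
    (d : Fin k → 𝕜) (v : EuclideanSpace 𝕜 m) :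
    d ⬝ᵥ (fun i => ⟪v, toEuclideanLin (Mᴴ * X i) v⟫_𝕜)
      = ⟪toEuclideanLin M v, toEuclideanLin (∑ i, d i • X i) v⟫_𝕜 := by
  simp only [dotProduct, inner_toEuclideanLin_conjTranspose_mul, map_sum, map_smul,
    LinearMap.sum_apply, LinearMap.smul_apply, inner_sum, inner_smul_right]

theorem zero_mem_kField_of_isSpectralApprox [Nonempty m] {k : ℕ}
    {𝒳 : Submodule 𝕜 (Matrix m m 𝕜)} {X : Fin k → Matrix m m 𝕜} (hX : ∀ i, X i ∈ 𝒳)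
    {Y Xs : Matrix m m 𝕜}
    (happrox : IsSpectralApprox 𝒳 Y Xs)
    (hconv : Convex ℝ (kField (fun i => (Y - Xs)ᴴ * X i) (maxRSV (Y - Xs)))) :
    0 ∈ kField (fun i => (Y - Xs)ᴴ * X i) (maxRSV (Y - Xs)) := by
  by_contra h0
  obtain ⟨d, δ, hδ, hsep⟩ := hconv.exists_lt_re_dotProduct (isCompact_kField _ _).isClosed h0
  set E := ∑ i, d i • X i
  have hE : E ∈ 𝒳 := 𝒳.sum_mem fun i _ => 𝒳.smul_mem _ (hX i)
  -- `E` correlates positively with `Y - Xs` on its maximal right singular vectors, so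
  -- `Xs + t • E` approximates `Y` strictly better than `Xs` for small `t > 0`
  obtain ⟨t, -, ht⟩ := (toEuclideanCLM (𝕜 := 𝕜) (Y - Xs)).exists_norm_sub_smul_lt
      (toEuclideanCLM (𝕜 := 𝕜) E) hδ fun v hv hmax => by
    have hv1 : ‖v‖ = 1 := mem_sphere_zero_iff_norm.1 hv
    have hmem : v ∈ maxRSV (Y - Xs) :=
      Submodule.subset_span ⟨hv1, hmax.trans (specNorm_eq_norm_toEuclideanCLM _).symm⟩
    have := hsep _ ⟨v, hmem, hv1, rfl⟩
    rw [dotProduct_inner_conjTranspose_mul] at this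
    exact this.le
  refine ht.not_ge ?_
  rw [← map_smul, ← map_sub, ← specNorm_eq_norm_toEuclideanCLM,
    ← specNorm_eq_norm_toEuclideanCLM, ← sub_add_eq_sub_sub]
  exact happrox.2 _ (𝒳.add_mem happrox.1 (𝒳.smul_mem _ hE))

theorem inner_toEuclideanLin_eq_zero_of_mem_span {k : ℕ} {M : Matrix m m 𝕜}
    {X : Fin k → Matrix m m 𝕜} {v : EuclideanSpace 𝕜 m}
    (h : ∀ i, ⟪v, toEuclideanLin (Mᴴ * X i) v⟫_𝕜 = 0) {W : Matrix m m 𝕜}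
    (hW : W ∈ Submodule.span 𝕜 (Set.range X)) :
    ⟪toEuclideanLin M v, toEuclideanLin W v⟫_𝕜 = 0 := by
  induction hW using Submodule.span_induction with
  | mem _ hA =>
    obtain ⟨i, rfl⟩ := hA
    rw [← inner_toEuclideanLin_conjTranspose_mul, h i]
  | zero => simp
  | add A B _ _ hA hB => rw [map_add, LinearMap.add_apply, inner_add_right, hA, hB, add_zero]
  | smul c A _ hA => rw [map_smul, LinearMap.smul_apply, inner_smul_right, hA, mul_zero]

theorem specNorm_le_norm_sub_of_inner_eq_zero {M W : Matrix m m 𝕜} {v : EuclideanSpace 𝕜 m}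
    (hv : v ∈ maxRSV M) (hv1 : ‖v‖ = 1)
    (h : ⟪toEuclideanLin M v, toEuclideanLin W v⟫_𝕜 = 0) :
    specNorm M ≤ ‖toEuclideanLin (M - W) v‖ := by
  rw [map_sub, LinearMap.sub_apply]
  refine le_of_pow_le_pow_left₀ two_ne_zero (norm_nonneg _) ?_
  rw [norm_sub_sq (𝕜 := 𝕜), h, map_zero, norm_toEuclideanLin_of_mem_maxRSV hv, hv1, mul_one]
  nlinarith [norm_nonneg (toEuclideanLin W v)]

theorem minMaxVal_eq_specNorm {𝒳 : Submodule 𝕜 (Matrix m m 𝕜)} {Y Xs : Matrix m m 𝕜}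
    (happrox : IsSpectralApprox 𝒳 Y Xs) : minMaxVal 𝒳 Y = specNorm (Y - Xs) :=
  IsLeast.csInf_eq ⟨⟨Xs, happrox.1, rfl⟩, by rintro _ ⟨X, hX, rfl⟩; exact happrox.2 X hX⟩

theorem maxMinVal_eq_specNorm {𝒳 : Submodule 𝕜 (Matrix m m 𝕜)} {Y Xs : Matrix m m 𝕜}
    (happrox : IsSpectralApprox 𝒳 Y Xs) {v : EuclideanSpace 𝕜 m} (hv : ‖v‖ = 1)
    (hle : ∀ X ∈ 𝒳, specNorm (Y - Xs) ≤ ‖toEuclideanLin (Y - X) v‖) :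
    maxMinVal 𝒳 Y = specNorm (Y - Xs) := by
  have hbdd (u : EuclideanSpace 𝕜 m) :
      BddBelow {s : ℝ | ∃ X ∈ 𝒳, s = ‖toEuclideanLin (Y - X) u‖} :=
    ⟨0, by rintro _ ⟨X, -, rfl⟩; exact norm_nonneg _⟩
  have hub (u : EuclideanSpace 𝕜 m) (hu : ‖u‖ = 1) :
      sInf {s : ℝ | ∃ X ∈ 𝒳, s = ‖toEuclideanLin (Y - X) u‖} ≤ specNorm (Y - Xs) := by
    refine (csInf_le (hbdd u) ⟨Xs, happrox.1, rfl⟩).trans ?_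
    rw [specNorm_eq_norm_toEuclideanCLM]
    exact (toEuclideanCLM (𝕜 := 𝕜) (Y - Xs)).unit_le_opNorm u hu.le
  refine IsGreatest.csSup_eq ⟨⟨v, hv, ?_⟩, by rintro _ ⟨u, hu, rfl⟩; exact hub u hu⟩
  refine le_antisymm (le_csInf ⟨_, Xs, happrox.1, rfl⟩ ?_) (hub v hv)
  rintro _ ⟨X, hX, rfl⟩
  exact hle X hX

end Matrix

theorem stmt14_general {n k : ℕ} (X : Fin k → Matrix (Fin n) (Fin n) 𝕜)
    (Y Xs : Matrix (Fin n) (Fin n) 𝕜)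
    (hY : Y ∉ Submodule.span 𝕜 (Set.range X))
    (happrox : IsSpectralApprox (Submodule.span 𝕜 (Set.range X)) Y Xs)
    (hconv : Convex ℝ (kField (fun i => (Y - Xs)ᴴ * X i) (maxRSV (Y - Xs)))) :
    maxMinVal (Submodule.span 𝕜 (Set.range X)) Y
      = minMaxVal (Submodule.span 𝕜 (Set.range X)) Y := by
  set 𝒳 := Submodule.span 𝕜 (Set.range X)
  have : Nonempty (Fin n) :=
    not_isEmpty_iff.1 fun _ => hY (Subsingleton.elim (0 : Matrix (Fin n) (Fin n) 𝕜) Y ▸ 𝒳.zero_mem)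
  obtain ⟨v, hvS, hv1, hv0⟩ :=
    zero_mem_kField_of_isSpectralApprox (fun i => Submodule.subset_span (Set.mem_range_self i))
      happrox hconv
  rw [minMaxVal_eq_specNorm happrox, maxMinVal_eq_specNorm happrox hv1]
  intro Z hZ
  rw [← sub_sub_sub_cancel_right Y Z Xs]
  exact specNorm_le_norm_sub_of_inner_eq_zero hvS hv1 <|
    inner_toEuclideanLin_eq_zero_of_mem_span (fun i => (congrFun hv0 i).symm)
      (𝒳.sub_mem hZ happrox.1)

theorem stmt14 {n k : ℕ} (X : Fin k → Matrix (Fin n) (Fin n) 𝕜)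
    (hdim : Module.finrank 𝕜 (Submodule.span 𝕜 (Set.range X)) = k)
    (Y Xs : Matrix (Fin n) (Fin n) 𝕜)
    (hY : Y ∉ Submodule.span 𝕜 (Set.range X))
    (happrox : IsSpectralApprox (Submodule.span 𝕜 (Set.range X)) Y Xs)
    (hconv : Convex ℝ (kField (fun i => (Y - Xs)ᴴ * X i) (maxRSV (Y - Xs)))) :
    maxMinVal (Submodule.span 𝕜 (Set.range X)) Y
      = minMaxVal (Submodule.span 𝕜 (Set.range X)) Y :=
  stmt14_general X Y Xs hY happrox hconv
end
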